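/- arXiv:2109.03491 — 3 statements merged into one kernel-verified Lean document; each statement's English description precedes it below -/
import Mathlib

section
/- Let Γ be a connected sesqui-regular graph with parameters (n,k,k) (i.e., any two vertices at distance 2 have exactly k common neighbors, where k is the valency) and smallest eigenvalue in [-3,-2). Then Γ is the complete multipartite graph K_{(n/3)×3}, i.e., the complement of a disjoint union of triangles. -/
open Finset Matrix SimpleGraph

lemma adjMatrix_isHermitian {V : Type*} [Fintype V] [DecidableEq V] (G : SimpleGraph V)
    [DecidableRel G.Adj] : (G.adjMatrix ℝ).IsHermitian := by
  rw [Matrix.IsHermitian, Matrix.conjTranspose]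
  show _ = _
  ext i j
  simp [SimpleGraph.adjMatrix, Matrix.transpose_apply, SimpleGraph.adj_comm]

/-- The smallest eigenvalue of (the adjacency matrix of) a finite simple graph. -/
noncomputable def minEig {V : Type*} [Fintype V] [DecidableEq V] (G : SimpleGraph V) : ℝ :=
  letI := Classical.decRel G.Adj
  ⨅ i, (adjMatrix_isHermitian G).eigenvalues i

/-!
Two vertices at distance 2 have `c = k` common neighbours out of `k`, so they have the same
neighbourhood. Following a path from a vertex `x`, every vertex is then `x`, a neighbour of `x`
or a twin of `x`; hence non-adjacency is an equivalence relation and `Γ` is complete multipartite,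
with every part of size `p = n - k` by regularity. With `J` the all-ones matrix, the adjacency
matrix satisfies `A (J - A) = p A` and `A J = J A = k J`, so `A (A + p) (A - k) = 0`. The smallest
eigenvalue is negative, hence equals `-p`, and `-p ∈ [-3, -2)` forces `p = 3`.
-/

open Polynomial

lemma Matrix.IsHermitian.eval_eigenvalues_eq_zero {n 𝕜 : Type*} [Fintype n] [DecidableEq n]
    [RCLike 𝕜] {A : Matrix n n 𝕜} (hA : A.IsHermitian) {q : ℝ[X]} (hq : aeval A q = 0)
    (i : n) : q.eval (hA.eigenvalues i) = 0 := by
  have : Nonempty n := ⟨i⟩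
  simpa [hq, spectrum.zero_eq] using
    spectrum.subset_polynomial_aeval A q ⟨_, hA.eigenvalues_mem_spectrum_real i, rfl⟩

namespace SimpleGraph

def Iso.completeMultipartiteGraph {ι ι' : Type*} {V : ι → Type*} {W : ι' → Type*} (e : ι ≃ ι')
    (f : ∀ i, V i ≃ W (e i)) : completeMultipartiteGraph V ≃g completeMultipartiteGraph W where
  toEquiv := e.sigmaCongr f
  map_rel_iff' := by simp [Equiv.sigmaCongr]

variable {V : Type*} {G : SimpleGraph V}

lemma neighborSet_eq_of_dist_eq_two [Finite V] {k : ℕ}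
    (hreg : ∀ x, (G.neighborSet x).ncard = k)
    (hsesqui : ∀ x y, G.dist x y = 2 → (G.neighborSet x ∩ G.neighborSet y).ncard = k)
    {x y : V} (h : G.dist x y = 2) : G.neighborSet x = G.neighborSet y :=
  (Set.eq_of_subset_of_ncard_le Set.inter_subset_left (by rw [hsesqui x y h, hreg])).symm.trans
    (Set.eq_of_subset_of_ncard_le Set.inter_subset_right (by rw [hsesqui x y h, hreg]))

lemma Connected.isCompleteMultipartite_of_dist_eq_two (hG : G.Connected)
    (h : ∀ x y, G.dist x y = 2 → G.neighborSet x = G.neighborSet y) :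
    G.IsCompleteMultipartite := by
  have twins {x y z : V} (hxy : G.Adj x y) (hyz : G.Adj y z) (hxz : ¬G.Adj x z) (hne : x ≠ z) :
      G.neighborSet x = G.neighborSet z :=
    h x z <| le_antisymm (dist_le (.cons hxy (.cons hyz .nil)))
      (hG.one_lt_dist_of_ne_of_not_adj hne hxz)
  have trichotomy (x y : V) : x = y ∨ G.Adj x y ∨ G.neighborSet x = G.neighborSet y := by
    obtain ⟨p⟩ := hG.preconnected y x
    induction p with
    | nil => exact .inl rfl
    | @cons u v w huv _ ih =>
      rcases ih with rfl | hadj | heq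
      · exact .inr (.inl huv.symm)
      · by_cases hu : G.Adj w u
        · exact .inr (.inl hu)
        by_cases he : w = u
        · exact .inl he
        exact .inr (.inr (twins hadj huv.symm hu he))
      · exact .inr (.inl (heq ▸ huv.symm : u ∈ G.neighborSet w))
  refine ⟨fun x y z hxy hyz hxz ↦ ?_⟩
  rcases trichotomy x y with rfl | hadj | heq
  · exact hyz hxz
  · exact hxy hadj
  · exact hyz (heq ▸ hxz : z ∈ G.neighborSet y)

lemma IsCompleteMultipartite.exists_iso_completeMultipartiteGraph [Fintype V] [DecidableEq V]
    [DecidableRel G.Adj] (h : G.IsCompleteMultipartite) {p : ℕ}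
    (hp : ∀ v, #(G.neighborFinset v)ᶜ = p) :
    ∃ m, Nonempty (G ≃g completeMultipartiteGraph fun _ : Fin m ↦ Fin p) := by
  refine ⟨_, ⟨h.iso.trans <| Iso.completeMultipartiteGraph (Finite.equivFin _) fun c ↦
    Finite.equivFinOfCardEq ?_⟩⟩
  change Nat.card {x // ¬G.Adj c.out x} = p
  rw [← hp c.out, Nat.card_eq_fintype_card, Fintype.card_subtype, neighborFinset_eq_filter,
    compl_filter]

lemma exists_eigenvalues_eq_minEig [Fintype V] [DecidableEq V] [Nonempty V] (G : SimpleGraph V)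
    [DecidableRel G.Adj] : ∃ i, (adjMatrix_isHermitian G).eigenvalues i = minEig G := by
  unfold minEig
  -- `minEig` is computed with `Classical.decRel G.Adj` rather than the given instance.
  convert exists_eq_ciInf_of_finite (f := (adjMatrix_isHermitian G).eigenvalues) using 3
  congr!

section adjMatrix

variable [Fintype V] [DecidableRel G.Adj] {α : Type*} [Ring α] {k p : ℕ}

lemma IsRegularOfDegree.adjMatrix_mul_of_one (hk : G.IsRegularOfDegree k) :
    G.adjMatrix α * of 1 = k • of 1 := by
  ext v w
  simp [hk v]

lemma IsRegularOfDegree.of_one_mul_adjMatrix (hk : G.IsRegularOfDegree k) :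
    of 1 * G.adjMatrix α = k • of 1 := by
  ext v w
  simp [hk w]

variable [DecidableEq V]

lemma IsCompleteMultipartite.adjMatrix_mul_of_one_sub_adjMatrix (h : G.IsCompleteMultipartite)
    (hp : ∀ v, #(G.neighborFinset v)ᶜ = p) :
    G.adjMatrix α * (of 1 - G.adjMatrix α) = p • G.adjMatrix α := by
  ext v w
  have hfilter : {u ∈ G.neighborFinset v | ¬G.Adj u w} =
      if G.Adj v w then (G.neighborFinset w)ᶜ else ∅ := by
    split_ifs with hvw
    · ext u
      simp only [mem_filter, mem_neighborFinset, mem_compl, G.adj_comm w u]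
      exact ⟨And.right, fun huw ↦ ⟨not_not.mp fun hvu ↦ h.trans v u w hvu huw hvw, huw⟩⟩
    · ext u
      simp only [mem_filter, mem_neighborFinset, notMem_empty, iff_false, not_and, not_not]
      exact fun hvu ↦ not_not.mp fun huw ↦ h.trans v w u hvw (by rwa [adj_comm]) hvu
  have hentry (u : V) :
      (of 1 - G.adjMatrix α : Matrix V V α) u w = if ¬G.Adj u w then 1 else 0 := by
    by_cases G.Adj u w <;> simp [*]
  simp only [adjMatrix_mul_apply, hentry, Finset.sum_boole, hfilter]
  split_ifs with hvw <;> simp [hvw, hp]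

lemma IsCompleteMultipartite.adjMatrix_mul_add_mul_sub_eq_zero (h : G.IsCompleteMultipartite)
    (hk : G.IsRegularOfDegree k) (hp : ∀ v, #(G.neighborFinset v)ᶜ = p) :
    G.adjMatrix α * (G.adjMatrix α + (p : Matrix V V α)) * (G.adjMatrix α - (k : Matrix V V α)) =
      0 := by
  have hsq : G.adjMatrix α * (G.adjMatrix α + (p : Matrix V V α)) = k • of 1 := by
    rw [mul_add, ← nsmul_eq_mul', ← h.adjMatrix_mul_of_one_sub_adjMatrix hp, mul_sub,
      add_sub_cancel, hk.adjMatrix_mul_of_one]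
  rw [hsq, smul_mul_assoc, mul_sub, hk.of_one_mul_adjMatrix, ← nsmul_eq_mul', sub_self, smul_zero]

lemma IsCompleteMultipartite.minEig_eq_neg [Nonempty V] (h : G.IsCompleteMultipartite)
    (hk : G.IsRegularOfDegree k) (hp : ∀ v, #(G.neighborFinset v)ᶜ = p) (hneg : minEig G < 0) :
    minEig G = -p := by
  obtain ⟨i, hi⟩ := exists_eigenvalues_eq_minEig G
  have hroot := (adjMatrix_isHermitian G).eval_eigenvalues_eq_zero
    (q := X * (X + (p : ℝ[X])) * (X - (k : ℝ[X])))
    (by simpa using h.adjMatrix_mul_add_mul_sub_eq_zero (α := ℝ) hk hp) i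
  rw [hi, eval_mul, eval_mul, eval_add, eval_sub, eval_X, eval_natCast, eval_natCast] at hroot
  have hne : minEig G * (minEig G - k) ≠ 0 :=
    (mul_pos_of_neg_of_neg hneg (by linarith [k.cast_nonneg (α := ℝ)])).ne'
  have hfactor : minEig G * (minEig G - k) * (minEig G + p) = 0 := by linear_combination hroot
  have := (mul_eq_zero.mp hfactor).resolve_left hne
  linarith

end adjMatrix

end SimpleGraph

theorem sesqui_c_eq_k {V : Type*} [Fintype V] [DecidableEq V] (G : SimpleGraph V) (n k : ℕ)
    (hn : Fintype.card V = n)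
    (hconn : G.Connected)
    (hreg : ∀ x : V, (G.neighborSet x).ncard = k)
    (hsesqui : ∀ x y : V, G.dist x y = 2 → (G.neighborSet x ∩ G.neighborSet y).ncard = k)
    (heig : minEig G ∈ Set.Ico (-3 : ℝ) (-2)) :
    ∃ m : ℕ, n = 3 * m ∧
      Nonempty (G ≃g SimpleGraph.completeMultipartiteGraph (fun _ : Fin m => Fin 3)) := by
  classical
  have : Nonempty V := hconn.nonempty
  have hcm : G.IsCompleteMultipartite :=
    hconn.isCompleteMultipartite_of_dist_eq_two fun _ _ ↦
      neighborSet_eq_of_dist_eq_two hreg hsesqui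
  have hk : G.IsRegularOfDegree k := fun v ↦ by
    rw [← card_neighborFinset_eq_degree, neighborFinset_def, ← Set.ncard_eq_toFinset_card', hreg]
  have hp (v : V) : #(G.neighborFinset v)ᶜ = n - k := by
    rw [card_compl, hn, card_neighborFinset_eq_degree, hk v]
  have hp3 : n - k = 3 := by
    rw [hcm.minEig_eq_neg hk hp (by linarith [heig.2]), Set.mem_Ico] at heig
    have : (2 : ℝ) < (n - k : ℕ) ∧ ((n - k : ℕ) : ℝ) ≤ 3 := ⟨by linarith, by linarith⟩
    norm_cast at this
    omega
  obtain ⟨m, ⟨e⟩⟩ := hcm.exists_iso_completeMultipartiteGraph (hp3 ▸ hp)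
  exact ⟨m, by simpa [hn, mul_comm] using Nat.card_congr e.toEquiv, ⟨e⟩⟩
end

section
/- The 3×3 matrix [[0,k,0],[1,k-1-4(k-1)/k,4(k-1)/k],[0,k-1,1]] has smallest eigenvalue -(2(k-1)+√(5k²-8k+4))/k, and this value is ≥ -3 if and only if k ≤ 3 (for integer k ≥ 3, forcing k = 3). -/
open Matrix

set_option maxHeartbeats 1600000 in
theorem quotient_matrix_three_by_three (k : ℕ) (hk : 3 ≤ k) :
    let K : ℝ := (k : ℝ)
    let M : Matrix (Fin 3) (Fin 3) ℝ :=
      !![0, K, 0;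
         1, K - 1 - 4 * (K - 1) / K, 4 * (K - 1) / K;
         0, K - 1, 1]
    let μ : ℝ := -(2 * (K - 1) + Real.sqrt (5 * K ^ 2 - 8 * K + 4)) / K
    (∃ v : Fin 3 → ℝ, v ≠ 0 ∧ M.mulVec v = μ • v) ∧
    (∀ (lam : ℝ) (v : Fin 3 → ℝ), v ≠ 0 → M.mulVec v = lam • v → μ ≤ lam) ∧
    ((-3 : ℝ) ≤ μ ↔ k ≤ 3) := by
  intro K M μ
  have hK : (3 : ℝ) ≤ K := by unfold K; exact_mod_cast hk
  have hK0 : (0 : ℝ) < K := by linarith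
  have hKne : K ≠ 0 := ne_of_gt hK0
  set D : ℝ := 5 * K ^ 2 - 8 * K + 4 with hD
  have hDpos : 0 < D := by nlinarith
  set s : ℝ := Real.sqrt D with hsdef
  have hs0 : 0 < s := Real.sqrt_pos.mpr hDpos
  have hs : s ^ 2 = D := Real.sq_sqrt hDpos.le
  have hμ : μ = -(2 * (K - 1) + s) / K := rfl
  have hμneg : μ < 0 := by
    rw [hμ]
    apply div_neg_of_neg_of_pos _ hK0
    nlinarith
  have hq : K * μ ^ 2 + 4 * (K - 1) * μ - K = 0 := by
    rw [hμ]
    field_simp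
    nlinarith [hs]
  refine ⟨⟨![K * (μ - 1), μ * (μ - 1), (K - 1) * μ], ?_, ?_⟩, ?_, ?_⟩
  · intro h
    have h1 : μ * (μ - 1) = 0 := congrFun h 1
    nlinarith
  · funext i
    fin_cases i <;>
      simp [M, Matrix.mulVec, dotProduct, Fin.sum_univ_three]
    · ring
    · field_simp
      nlinarith [hq]
    · ring
  · intro lam v hv hMv
    rcases le_or_gt 0 lam with h0 | h0
    · linarith
    have e0 : K * v 1 = lam * v 0 := by
      have := congrFun hMv 0
      simpa [M, Matrix.mulVec, dotProduct, Fin.sum_univ_three] using this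
    have e1 : v 0 + (K - 1 - 4 * (K - 1) / K) * v 1 + 4 * (K - 1) / K * v 2 = lam * v 1 := by
      have := congrFun hMv 1
      simpa [M, Matrix.mulVec, dotProduct, Fin.sum_univ_three] using this
    have e2 : (K - 1) * v 1 + v 2 = lam * v 2 := by
      have := congrFun hMv 2
      simpa [M, Matrix.mulVec, dotProduct, Fin.sum_univ_three] using this
    field_simp at e1
    have hlne : lam ≠ 0 := ne_of_lt h0
    have hl1 : lam - 1 ≠ 0 := by intro h; nlinarith
    have hb : v 1 ≠ 0 := by
      intro hb
      apply hv
      have ha : v 0 = 0 := by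
        have h' := e0
        rw [hb] at h'
        simp at h'
        rcases h' with h' | h'
        · exact absurd h' hlne
        · exact h'
      have hc : v 2 = 0 := by
        have h' := e2
        rw [hb] at h'
        have h'' : (lam - 1) * v 2 = 0 := by linarith
        rcases mul_eq_zero.mp h'' with h' | h'
        · exact absurd h' hl1
        · exact h'
      funext i
      fin_cases i <;> simpa [ha, hb, hc]
    have key : (lam - K) * (K * lam ^ 2 + 4 * (K - 1) * lam - K) * v 1 = 0 := by
      linear_combination (-(lam * (lam - 1))) * e1 + (-(K * (lam - 1))) * e0 +
        (-(4 * (K - 1) * lam)) * e2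
    have hlK : lam - K ≠ 0 := by intro h; nlinarith
    have hq2 : K * lam ^ 2 + 4 * (K - 1) * lam - K = 0 := by
      rcases mul_eq_zero.mp key with h | h
      · rcases mul_eq_zero.mp h with h' | h'
        · exact absurd h' hlK
        · exact h'
      · exact absurd h hb
    have hsq : (K * lam + 2 * (K - 1)) ^ 2 = s ^ 2 := by
      rw [hs]; linear_combination K * hq2
    have hge : -s ≤ K * lam + 2 * (K - 1) := by nlinarith [hsq, hs0]
    rw [hμ, div_le_iff₀ hK0]
    linarith
  · constructor
    · intro h
      rw [hμ, le_div_iff₀ hK0] at h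
      have hsle : s ≤ K + 2 := by linarith
      have hDle : D ≤ (K + 2) ^ 2 := by
        rw [← hs]; exact pow_le_pow_left₀ hs0.le hsle 2
      have hDle' : 5 * K ^ 2 - 8 * K + 4 ≤ (K + 2) ^ 2 := hD ▸ hDle
      have hK3 : K ≤ 3 := by nlinarith [hDle', hK0]
      have : (k : ℝ) ≤ 3 := hK3
      exact_mod_cast this
    · intro h
      have hK3 : K ≤ 3 := by unfold K; exact_mod_cast h
      have hDle : D ≤ (K + 2) ^ 2 := by rw [hD]; nlinarith [hK3, hK0]
      have hsle : s ≤ K + 2 := by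
        rw [hsdef]
        calc Real.sqrt D ≤ Real.sqrt ((K + 2) ^ 2) := Real.sqrt_le_sqrt hDle
          _ = K + 2 := Real.sqrt_sq (by linarith)
      rw [hμ, le_div_iff₀ hK0]
      linarith
end

section
/- The complement of a disjoint union of cycles C_{ℓ₁}, …, C_{ℓ_m} (each ℓ_i ≥ 3) is 1-integrable with smallest eigenvalue at least -3: explicitly, assigning to vertex x_{i,p} the vector 𝐞 + 𝐞_{i,p} - 𝐞_{i,p+1} (indices mod ℓ_i), where {𝐞, 𝐞_{i,p}} is an orthonormal set of integral vectors, gives vectors of squared norm 3 with pairwise inner product 1 on edges and 0 on non-edges of the complement graph. -/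
open Finset Matrix SimpleGraph

/-!
With `x⁺` the successor of `x` on its cycle, the vectors `𝐱 = 𝐞 + 𝐞_x - 𝐞_{x⁺}` satisfy
`(𝐱, 𝐲) = 1 + [x = y] - [x = y⁺] - [x⁺ = y] + [x⁺ = y⁺]`. Since `x ↦ x⁺` is a permutation
without fixed points and, as `ℓ_i ≥ 3`, without 2-cycles, this is `3` on the diagonal, `0` for
neighbours on a cycle and `1` otherwise. Hence `A + 3 I` is the Gram matrix `Bᵀ B` of these
vectors, so it is positive semidefinite and every eigenvalue of `A` is at least `-3`.
-/

theorem Nat.add_mod_ne_self {p k n : ℕ} (hp : p < n) (hk : 0 < k) (hkn : k < n) :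
    (p + k) % n ≠ p := by
  intro h
  have hdvd : n ∣ k := by
    rw [← Nat.modEq_zero_iff_dvd]
    refine Nat.ModEq.add_left_cancel' p ?_
    rw [add_zero, Nat.ModEq, h, Nat.mod_eq_of_lt hp]
  exact absurd (Nat.le_of_dvd hk hdvd) (by omega)

theorem Sigma.fin_ext_iff {ι : Type*} {ℓ : ι → ℕ} {x y : Σ i, Fin (ℓ i)} :
    x = y ↔ x.1 = y.1 ∧ (x.2 : ℕ) = y.2 := by
  obtain ⟨i, p⟩ := x
  obtain ⟨j, q⟩ := y
  constructor
  · rintro ⟨⟩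
    exact ⟨rfl, rfl⟩
  · rintro ⟨rfl, h⟩
    exact congrArg (Sigma.mk i) (Fin.ext h)

def IsCycleSucc {ι : Type*} (ℓ : ι → ℕ) (nxt : (Σ i, Fin (ℓ i)) → Σ i, Fin (ℓ i)) : Prop :=
  ∀ x, (nxt x).1 = x.1 ∧ (nxt x).2.val = (x.2.val + 1) % ℓ x.1

namespace IsCycleSucc

variable {ι : Type*} {ℓ : ι → ℕ} {nxt : (Σ i, Fin (ℓ i)) → Σ i, Fin (ℓ i)}

theorem apply_eq_iff (h : IsCycleSucc ℓ nxt) {x y : Σ i, Fin (ℓ i)} :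
    nxt x = y ↔ x.1 = y.1 ∧ (x.2.val + 1) % ℓ x.1 = y.2.val := by
  rw [Sigma.fin_ext_iff, (h x).2, (h x).1]

theorem injective (h : IsCycleSucc ℓ nxt) : Function.Injective nxt := by
  intro x y hxy
  have hfst : x.1 = y.1 := by rw [← (h x).1, hxy, (h y).1]
  have hval : (x.2.val + 1) % ℓ x.1 = (y.2.val + 1) % ℓ y.1 := by
    rw [← (h x).2, ← (h y).2, hxy]
  obtain ⟨i, p⟩ := x
  obtain ⟨j, q⟩ := y
  obtain rfl : i = j := hfst
  exact Sigma.fin_ext_iff.mpr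
    ⟨rfl, (Nat.ModEq.add_right_cancel' 1 hval).eq_of_lt_of_lt p.isLt q.isLt⟩

theorem apply_ne_self (h : IsCycleSucc ℓ nxt) {x : Σ i, Fin (ℓ i)} (hℓ : 2 ≤ ℓ x.1) :
    nxt x ≠ x := by
  rw [Ne, h.apply_eq_iff]
  exact fun ⟨_, hx⟩ ↦ Nat.add_mod_ne_self x.2.isLt one_pos hℓ hx

theorem apply_apply_ne_self (h : IsCycleSucc ℓ nxt) {x : Σ i, Fin (ℓ i)} (hℓ : 3 ≤ ℓ x.1) :
    nxt (nxt x) ≠ x := by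
  rw [Ne, h.apply_eq_iff, (h x).2, (h x).1, Nat.mod_add_mod, add_assoc]
  exact fun ⟨_, hx⟩ ↦ Nat.add_mod_ne_self x.2.isLt two_pos hℓ hx

theorem apply_eq_or_apply_eq_iff (h : IsCycleSucc ℓ nxt) {x y : Σ i, Fin (ℓ i)} :
    (x.1 = y.1 ∧ ((x.2.val + 1) % ℓ x.1 = y.2.val ∨ (y.2.val + 1) % ℓ y.1 = x.2.val)) ↔
      (nxt x = y ∨ nxt y = x) := by
  rw [h.apply_eq_iff, h.apply_eq_iff, and_or_left, eq_comm (a := y.1)]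

end IsCycleSucc

section shiftVector

variable {V : Type*} [DecidableEq V] (nxt : V → V)

/-- `𝐞 + 𝐞_x - 𝐞_{nxt x}`, with `Sum.inl ()` as the coordinate of `𝐞`. -/
def shiftVector (x : V) : Unit ⊕ V → ℤ :=
  fun j ↦ (if j = Sum.inl () then 1 else 0) + (if j = Sum.inr x then 1 else 0)
    - (if j = Sum.inr (nxt x) then 1 else 0)

theorem shiftVector_eq (x : V) :
    shiftVector nxt x = Pi.single (Sum.inl ()) 1 + Pi.single (Sum.inr x) 1
      - Pi.single (Sum.inr (nxt x)) 1 := by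
  ext j
  simp [shiftVector, Pi.single_apply]

theorem shiftVector_dotProduct [Fintype V] (x y : V) :
    shiftVector nxt x ⬝ᵥ shiftVector nxt y = 1 + (if x = y then 1 else 0)
      - (if x = nxt y then 1 else 0) - (if nxt x = y then 1 else 0)
      + (if nxt x = nxt y then 1 else 0) := by
  simp only [shiftVector_eq, add_dotProduct, sub_dotProduct, dotProduct_add, dotProduct_sub,
    single_dotProduct, Pi.single_apply]
  simp only [Sum.inr.injEq, reduceCtorEq, eq_comm, ↓reduceIte, mul_one, mul_zero, mul_ite,
    add_zero, sub_zero, zero_add]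
  ring

variable {nxt}

theorem shiftVector_dotProduct_self [Fintype V] (hfix : ∀ x, nxt x ≠ x) (x : V) :
    shiftVector nxt x ⬝ᵥ shiftVector nxt x = 3 := by
  simp [shiftVector_dotProduct, hfix x, (hfix x).symm]

theorem shiftVector_dotProduct_eq_one [Fintype V] (hinj : Function.Injective nxt) {x y : V}
    (hxy : x ≠ y) (h : ¬ (nxt x = y ∨ nxt y = x)) : shiftVector nxt x ⬝ᵥ shiftVector nxt y = 1 := by
  obtain ⟨hx, hy⟩ := not_or.mp h
  simp [shiftVector_dotProduct, hxy, hinj.ne hxy, hx, Ne.symm hy]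

theorem shiftVector_dotProduct_eq_zero [Fintype V] (hinj : Function.Injective nxt)
    (hfix : ∀ x, nxt x ≠ x) (hfix₂ : ∀ x, nxt (nxt x) ≠ x) {x y : V} (h : nxt x = y ∨ nxt y = x) :
    shiftVector nxt x ⬝ᵥ shiftVector nxt y = 0 := by
  rcases h with rfl | rfl
  · simp [shiftVector_dotProduct, (hfix x).symm, hinj.ne (hfix x).symm, Ne.symm (hfix₂ x)]
  · simp [shiftVector_dotProduct, hfix y, hinj.ne (hfix y), hfix₂ y]

end shiftVector

namespace Matrix.IsHermitian

theorem neg_le_eigenvalues_of_posSemidef_add_smul {n : Type*} [Fintype n] [DecidableEq n]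
    {A : Matrix n n ℝ} (hA : A.IsHermitian) {c : ℝ} (hc : (A + c • 1).PosSemidef) (i : n) :
    -c ≤ hA.eigenvalues i := by
  have hmem : hA.eigenvalues i + c ∈ spectrum ℝ (A + c • 1) := by
    rw [← Algebra.algebraMap_eq_smul_one, ← spectrum.add_singleton_eq]
    exact Set.add_mem_add (hA.eigenvalues_mem_spectrum_real i) rfl
  obtain ⟨j, hj⟩ := hc.1.spectrum_real_eq_range_eigenvalues ▸ hmem
  linarith [hc.eigenvalues_nonneg j]

end Matrix.IsHermitian

theorem SimpleGraph.neg_le_minEig {V : Type*} [Fintype V] [DecidableEq V] (G : SimpleGraph V)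
    [DecidableRel G.Adj] {c : ℝ} (hc₀ : 0 ≤ c) (hc : (G.adjMatrix ℝ + c • 1).PosSemidef) :
    -c ≤ minEig G := by
  obtain rfl : ‹DecidableRel G.Adj› = Classical.decRel G.Adj := Subsingleton.elim _ _
  let := Classical.decRel G.Adj
  rcases isEmpty_or_nonempty V with hV | hV
  · simpa [minEig] using hc₀
  · exact le_ciInf fun i ↦
      (adjMatrix_isHermitian G).neg_le_eigenvalues_of_posSemidef_add_smul hc i

theorem SimpleGraph.posSemidef_adjMatrix_add_smul_of_dotProduct {V W : Type*} [Fintype V]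
    [DecidableEq V] [Fintype W] (G : SimpleGraph V) [DecidableRel G.Adj] (v : V → W → ℤ) (c : ℤ)
    (h_self : ∀ x, v x ⬝ᵥ v x = c) (h_adj : ∀ x y, G.Adj x y → v x ⬝ᵥ v y = 1)
    (h_nonadj : ∀ x y, x ≠ y → ¬ G.Adj x y → v x ⬝ᵥ v y = 0) :
    (G.adjMatrix ℝ + (c : ℝ) • 1).PosSemidef := by
  let B : Matrix W V ℝ := Matrix.of fun j x ↦ (v x j : ℝ)
  have hgram : Bᴴ * B = G.adjMatrix ℝ + (c : ℝ) • 1 := by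
    ext x y
    have hxy : (Bᴴ * B) x y = ((v x ⬝ᵥ v y : ℤ) : ℝ) := by
      simp [Matrix.mul_apply, B, dotProduct]
    rw [hxy]
    by_cases hxy : x = y
    · subst hxy; simp [h_self]
    · by_cases hadj : G.Adj x y
      · simp [h_adj x y hadj, hadj, hxy]
      · simp [h_nonadj x y hxy hadj, hadj, hxy]
  exact hgram ▸ posSemidef_conjTranspose_mul_self B

theorem complement_of_disjoint_cycles_one_integrable_general
    (m : ℕ) (ℓ : Fin m → ℕ) (hℓ : ∀ i, 3 ≤ ℓ i)
    (G : SimpleGraph (Σ i : Fin m, Fin (ℓ i)))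
    (hG : ∀ x y : Σ i : Fin m, Fin (ℓ i), G.Adj x y ↔ x ≠ y ∧
      ¬ (x.1 = y.1 ∧ ((x.2.val + 1) % ℓ x.1 = y.2.val ∨ (y.2.val + 1) % ℓ y.1 = x.2.val)))
    (nxt : (Σ i : Fin m, Fin (ℓ i)) → (Σ i : Fin m, Fin (ℓ i)))
    (hnxt : ∀ x, (nxt x).1 = x.1 ∧ ((nxt x).2.val = (x.2.val + 1) % ℓ x.1)) :
    let f : (Σ i : Fin m, Fin (ℓ i)) → (Unit ⊕ Σ i : Fin m, Fin (ℓ i)) → ℤ :=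
      fun x j => (if j = Sum.inl () then 1 else 0) + (if j = Sum.inr x then 1 else 0)
        - (if j = Sum.inr (nxt x) then 1 else 0)
    (∀ x, ∑ j, f x j * f x j = 3) ∧
    (∀ x y, G.Adj x y → ∑ j, f x j * f y j = 1) ∧
    (∀ x y, x ≠ y → ¬ G.Adj x y → ∑ j, f x j * f y j = 0) ∧
    (-3 : ℝ) ≤ minEig G := by
  intro f
  have hsucc : IsCycleSucc ℓ nxt := hnxt
  have hfix x : nxt x ≠ x := hsucc.apply_ne_self (by linarith [hℓ x.1])
  have hfix₂ x : nxt (nxt x) ≠ x := hsucc.apply_apply_ne_self (hℓ x.1)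
  have hadj x y : G.Adj x y ↔ x ≠ y ∧ ¬ (nxt x = y ∨ nxt y = x) := by
    rw [hG, hsucc.apply_eq_or_apply_eq_iff]
  have h_self x : shiftVector nxt x ⬝ᵥ shiftVector nxt x = 3 :=
    shiftVector_dotProduct_self hfix x
  have h_adj x y (h : G.Adj x y) : shiftVector nxt x ⬝ᵥ shiftVector nxt y = 1 :=
    shiftVector_dotProduct_eq_one hsucc.injective ((hadj x y).1 h).1 ((hadj x y).1 h).2
  have h_nonadj x y (hxy : x ≠ y) (h : ¬ G.Adj x y) :
      shiftVector nxt x ⬝ᵥ shiftVector nxt y = 0 :=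
    shiftVector_dotProduct_eq_zero hsucc.injective hfix hfix₂
      (not_not.mp fun hn ↦ h ((hadj x y).2 ⟨hxy, hn⟩))
  refine ⟨h_self, h_adj, h_nonadj, ?_⟩
  classical
  exact_mod_cast G.neg_le_minEig (by norm_num)
    (G.posSemidef_adjMatrix_add_smul_of_dotProduct _ 3 h_self h_adj h_nonadj)

theorem complement_of_disjoint_cycles_one_integrable
    (m : ℕ) (hm : 0 < m) (ℓ : Fin m → ℕ) (hℓ : ∀ i, 3 ≤ ℓ i)
    (G : SimpleGraph (Σ i : Fin m, Fin (ℓ i)))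
    (hG : ∀ x y : Σ i : Fin m, Fin (ℓ i), G.Adj x y ↔ x ≠ y ∧
      ¬ (x.1 = y.1 ∧ ((x.2.val + 1) % ℓ x.1 = y.2.val ∨ (y.2.val + 1) % ℓ y.1 = x.2.val)))
    (nxt : (Σ i : Fin m, Fin (ℓ i)) → (Σ i : Fin m, Fin (ℓ i)))
    (hnxt : ∀ x, (nxt x).1 = x.1 ∧ ((nxt x).2.val = (x.2.val + 1) % ℓ x.1)) :
    let f : (Σ i : Fin m, Fin (ℓ i)) → (Unit ⊕ Σ i : Fin m, Fin (ℓ i)) → ℤ :=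
      fun x j => (if j = Sum.inl () then 1 else 0) + (if j = Sum.inr x then 1 else 0)
        - (if j = Sum.inr (nxt x) then 1 else 0)
    (∀ x, ∑ j, f x j * f x j = 3) ∧
    (∀ x y, G.Adj x y → ∑ j, f x j * f y j = 1) ∧
    (∀ x y, x ≠ y → ¬ G.Adj x y → ∑ j, f x j * f y j = 0) ∧
    (-3 : ℝ) ≤ minEig G :=
  complement_of_disjoint_cycles_one_integrable_general m ℓ hℓ G hG nxt hnxt
end
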